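/- Let N be a nilpotent Lie subalgebra of an associative \mathbb{Q}-algebra (with bracket the commutator) and let \Psi \in N, \Lambda, \Lambda^{(0)} elements of the ambient algebra. If \delta\Psi := \mathcal{O}_{-i\Psi}^{-1}(\Lambda - e^{i\Psi} \Lambda^{(0)} e^{-i\Psi}), where \mathcal{O}_X = (1 - e^{-ad_X})/ad_X and its inverse is the Bernoulli series \sum_m (B_m^+/m!)(ad_X)^m, then the component of \delta\Psi of homogeneous order m in \Psi equals (B_m^+/m!)(ad_{-i\Psi})^m[\Lambda + (-1 + 2\delta_{m,1})\Lambda^{(0)}]. -/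
import Mathlib

/-- Iterated commutator `ad_X^k(Y)`. -/
def adPow {B : Type*} [Mul B] [Sub B] (X : B) : ℕ → B → B
  | 0, Y => Y
  | k + 1, Y => X * adPow X k Y - adPow X k Y * X

section AuxLemmas
variable {B : Type*} [Ring B]

lemma adPow_zero_right (X : B) (k : ℕ) : adPow X k 0 = 0 := by
  induction k with
  | zero => rfl
  | succ k ih => simp [adPow, ih]

lemma adPow_add_exp (X : B) (a b : ℕ) (Y : B) :
    adPow X (a + b) Y = adPow X a (adPow X b Y) := by
  induction a with
  | zero => simp [adPow]
  | succ a ih =>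
    have : a + 1 + b = (a + b) + 1 := by omega
    rw [this, adPow, ih]; rfl

lemma adPow_sub (X : B) (k : ℕ) (Y Z : B) :
    adPow X k (Y - Z) = adPow X k Y - adPow X k Z := by
  induction k with
  | zero => rfl
  | succ k ih => simp only [adPow, ih]; noncomm_ring

lemma adPow_add_right (X : B) (k : ℕ) (Y Z : B) :
    adPow X k (Y + Z) = adPow X k Y + adPow X k Z := by
  induction k with
  | zero => rfl
  | succ k ih => simp only [adPow, ih]; noncomm_ring

lemma adPow_smul (c : ℂ) [Algebra ℂ B] (X : B) (k : ℕ) (Y : B) :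
    adPow X k (c • Y) = c • adPow X k Y := by
  induction k with
  | zero => rfl
  | succ k ih => simp only [adPow, ih, mul_smul_comm, smul_mul_assoc, smul_sub]

lemma adPow_sum {ι : Type*} (s : Finset ι) (X : B) (k : ℕ) (f : ι → B) :
    adPow X k (∑ i ∈ s, f i) = ∑ i ∈ s, adPow X k (f i) := by
  induction s using Finset.cons_induction with
  | empty => simp [adPow_zero_right]
  | cons i s hi ih => simp [Finset.sum_cons, adPow_add_right, ih]

lemma adPow_neg_left (X : B) (k : ℕ) (Y : B) :
    adPow (-X) k Y = ((-1 : ℤ) ^ k) • adPow X k Y := by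
  induction k with
  | zero => simp [adPow]
  | succ k ih =>
    simp only [adPow, ih, pow_succ, mul_smul_comm, smul_mul_assoc, neg_mul, mul_neg,
      smul_sub, smul_neg, mul_comm ((-1:ℤ)^k) (-1 : ℤ), neg_smul, mul_smul]
    abel

lemma map_adPow {C : Type*} [Ring C] (f : B →+* C) (X : B) (k : ℕ) (Y : B) :
    f (adPow X k Y) = adPow (f X) k (f Y) := by
  induction k with
  | zero => rfl
  | succ k ih => simp only [adPow, map_sub, map_mul, ih]

lemma adPow_central_mul (s X : B) (hs : ∀ a : B, Commute s a) (k : ℕ) (Y : B) :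
    adPow (s * X) k Y = s ^ k * adPow X k Y := by
  induction k with
  | zero => simp [adPow]
  | succ k ih =>
    have h1 : s ^ k * X = X * s ^ k := ((hs X).pow_left k).eq
    have h2 : s ^ k * s = s * s ^ k := ((hs (s ^ k)).eq).symm
    calc adPow (s * X) (k + 1) Y
        = (s * X) * (s ^ k * adPow X k Y) - (s ^ k * adPow X k Y) * (s * X) := by
          rw [adPow, ih]
      _ = s ^ (k + 1) * (X * adPow X k Y) - s ^ (k+1) * (adPow X k Y * X) := by
          rw [pow_succ]
          have e1 : (s * X) * (s ^ k * adPow X k Y) = (s ^ k * s) * (X * adPow X k Y) := by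
            rw [h2]
            simp only [mul_assoc]
            rw [← mul_assoc X (s^k), ← h1]
            simp only [mul_assoc]
          have e2 : (s ^ k * adPow X k Y) * (s * X) = (s ^ k * s) * (adPow X k Y * X) := by
            rw [mul_assoc (s^k), ← mul_assoc (adPow X k Y) s X, ← (hs (adPow X k Y)).eq,
              ← mul_assoc, ← mul_assoc, mul_assoc (s^k * s)]
          rw [e1, e2, h2]
      _ = s ^ (k + 1) * adPow X (k + 1) Y := by rw [adPow, mul_sub]

lemma adPow_mul_central (s : B) (hs : ∀ a : B, Commute s a) (X : B) (k : ℕ) (Y : B) :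
    adPow X k (s * Y) = s * adPow X k Y := by
  induction k with
  | zero => rfl
  | succ k ih =>
    rw [adPow, ih, adPow, mul_sub, ← mul_assoc, ← (hs X).eq, mul_assoc, ← mul_assoc s, mul_assoc, mul_assoc s (adPow X k Y) X]

end AuxLemmas

lemma keyQ (m : ℕ) :
    ∑ p ∈ Finset.range (m+1),
        (-1:ℚ)^p * (bernoulli' p / p.factorial) * ((m-p).factorial : ℚ)⁻¹
    = (bernoulli' m / m.factorial) * (-1)^m * (1 - 2 * (if m = 1 then 1 else 0)) := by
  have hterm : ∀ p ∈ Finset.range (m+1),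
      (-1:ℚ)^p * (bernoulli' p / p.factorial) * ((m-p).factorial : ℚ)⁻¹
        = (m.choose p : ℚ) * bernoulli p / m.factorial := by
    intro p hp
    rw [Finset.mem_range] at hp
    have hpm : p ≤ m := by omega
    rw [Nat.cast_choose ℚ hpm, bernoulli]
    have h1 : (p.factorial : ℚ) ≠ 0 := Nat.cast_ne_zero.mpr p.factorial_ne_zero
    have h2 : ((m-p).factorial : ℚ) ≠ 0 := Nat.cast_ne_zero.mpr (m-p).factorial_ne_zero
    have h3 : (m.factorial : ℚ) ≠ 0 := Nat.cast_ne_zero.mpr m.factorial_ne_zero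
    field_simp
  rw [Finset.sum_congr rfl hterm, ← Finset.sum_div, Finset.sum_range_succ, sum_bernoulli]
  by_cases h : m = 1
  · subst h; rw [bernoulli'_one]; norm_num [bernoulli]
  · simp only [h, if_false, Nat.choose_self, Nat.cast_one, one_mul, zero_add,
      bernoulli]
    ring

lemma adPow_smul_left {B : Type*} [Ring B] [Algebra ℂ B] (c : ℂ) (X : B) (k : ℕ) (Y : B) :
    adPow (c • X) k Y = c ^ k • adPow X k Y := by
  induction k with
  | zero => simp [adPow]
  | succ k ih =>
    simp only [adPow, ih, smul_mul_assoc, mul_smul_comm, smul_smul, smul_sub, pow_succ]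
    rw [mul_comm c (c ^ k)]

lemma coeff_X_pow_mul_C {A : Type*} [Ring A] (a : A) (k n : ℕ) :
    (Polynomial.X ^ k * Polynomial.C a).coeff n = if n = k then a else 0 := by
  rw [Polynomial.X_pow_mul, Polynomial.coeff_C_mul, Polynomial.coeff_X_pow]
  split <;> simp

/-- Let `A` be an associative `ℂ`-algebra, `Ψ ∈ A` with `ad_Ψ` nilpotent
(`(ad_Ψ)^N = 0`, so all operator series below are finite sums), and
`δΨ = 𝒪_{-iΨ}⁻¹(Λ - e^{iΨ} Λ⁰ e^{-iΨ})` where `𝒪_X⁻¹` is the Bernoulli series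
`∑_p (B_p⁺/p!)(ad_X)^p` and `e^{iΨ} Λ⁰ e^{-iΨ} = ∑_q (ad_{iΨ})^q(Λ⁰)/q!`.
Grading the number of `Ψ`'s by a formal parameter `t` (replacing `Ψ ↦ tΨ`), the
homogeneous component of order `m` in `Ψ` of `δΨ` — i.e. the coefficient of `t^m` —
equals `(B_m⁺/m!)(ad_{-iΨ})^m [Λ + (-1 + 2δ_{m,1}) Λ⁰]`. -/
theorem stmt13 {A : Type*} [Ring A] [Algebra ℂ A] (Ψ Λ Λ0 : A) (N : ℕ)
    (hN : ∀ Y : A, adPow Ψ N Y = 0) (m : ℕ) (hm : m ≤ N) :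
    Polynomial.coeff
      (∑ p ∈ Finset.range (N + 1),
        (((bernoulli' p / p.factorial : ℚ)) : ℂ) •
          adPow (-(Polynomial.C (algebraMap ℂ A Complex.I * Ψ) * Polynomial.X)) p
            (Polynomial.C Λ -
              ∑ q ∈ Finset.range (N + 1),
                ((q.factorial : ℂ))⁻¹ •
                  adPow (Polynomial.C (algebraMap ℂ A Complex.I * Ψ) * Polynomial.X) q
                    (Polynomial.C Λ0))) m
      = (((bernoulli' m / m.factorial : ℚ)) : ℂ) •
          adPow (-(algebraMap ℂ A Complex.I * Ψ)) m
            (Λ + ((-1 : ℂ) + if m = 1 then 2 else 0) • Λ0) := by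
  set X0 : A := algebraMap ℂ A Complex.I * Ψ with hX0
  have hT : ∀ a : Polynomial A, Commute (Polynomial.X : Polynomial A) a :=
    fun a => Polynomial.commute_X a
  have hCXT : Polynomial.C X0 * Polynomial.X = Polynomial.X * Polynomial.C X0 :=
    (hT (Polynomial.C X0)).eq.symm
  have hbase : ∀ (k : ℕ) (W : A),
      adPow (Polynomial.C X0 * Polynomial.X) k (Polynomial.C W)
        = Polynomial.X ^ k * Polynomial.C (adPow X0 k W) := by
    intro k W
    rw [hCXT, adPow_central_mul _ _ hT, ← map_adPow]
  have hsummand : ∀ p : ℕ,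
      adPow (-(Polynomial.C X0 * Polynomial.X)) p
        (Polynomial.C Λ - ∑ q ∈ Finset.range (N + 1),
          ((q.factorial : ℂ))⁻¹ •
            adPow (Polynomial.C X0 * Polynomial.X) q (Polynomial.C Λ0))
      = ((-1 : ℤ) ^ p) •
          (Polynomial.X ^ p * Polynomial.C (adPow X0 p Λ)
            - ∑ q ∈ Finset.range (N + 1),
                ((q.factorial : ℂ))⁻¹ •
                  (Polynomial.X ^ (p + q) * Polynomial.C (adPow X0 (p + q) Λ0))) := by
    intro p
    rw [adPow_neg_left]
    congr 1
    rw [adPow_sub, hbase]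
    congr 1
    rw [adPow_sum]
    refine Finset.sum_congr rfl fun q _ => ?_
    rw [adPow_smul, ← adPow_add_exp, hbase]
  rw [Polynomial.finset_sum_coeff]
  simp only [hsummand, Polynomial.coeff_smul, Polynomial.coeff_sub,
    Polynomial.finset_sum_coeff, coeff_X_pow_mul_C, smul_ite, smul_zero, smul_sub,
    Finset.smul_sum]
  have hrow : ∀ p : ℕ,
      (∑ q ∈ Finset.range (N+1),
        if m = p + q then
          ((bernoulli' p / p.factorial : ℚ) : ℂ) • (-1:ℤ)^p •
            ((q.factorial : ℂ))⁻¹ • adPow X0 (p+q) Λ0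
        else 0)
      = if p ≤ m then
          ((bernoulli' p / p.factorial : ℚ) : ℂ) • (-1:ℤ)^p •
            (((m-p).factorial : ℂ))⁻¹ • adPow X0 m Λ0
        else 0 := by
    intro p
    by_cases hpm : p ≤ m
    · rw [Finset.sum_eq_single_of_mem (m - p) (Finset.mem_range.mpr (by omega))]
      · rw [if_pos hpm, if_pos (by omega), (by omega : p + (m - p) = m)]
      · intro q _ hq
        rw [if_neg (by omega)]
    · rw [if_neg hpm]
      refine Finset.sum_eq_zero fun q _ => ?_
      rw [if_neg (by omega)]
  rw [Finset.sum_sub_distrib, Finset.sum_ite_eq, Finset.sum_congr rfl (fun p _ => hrow p),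
    if_pos (Finset.mem_range.mpr (by omega))]
  have hcut : ∑ p ∈ Finset.range (N+1),
      (if p ≤ m then
          ((bernoulli' p / p.factorial : ℚ) : ℂ) • (-1:ℤ)^p •
            (((m-p).factorial : ℂ))⁻¹ • adPow X0 m Λ0
        else 0)
      = ∑ p ∈ Finset.range (m+1),
          ((bernoulli' p / p.factorial : ℚ) : ℂ) • (-1:ℤ)^p •
            (((m-p).factorial : ℂ))⁻¹ • adPow X0 m Λ0 := by
    rw [← Finset.sum_subset (Finset.range_subset_range.mpr (by omega : m+1 ≤ N+1))]
    · exact Finset.sum_congr rfl fun p hp => if_pos (by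
        simp only [Finset.mem_range] at hp; omega)
    · intro p hp hnp
      simp only [Finset.mem_range] at hp hnp
      rw [if_neg (by omega)]
  rw [hcut]
  rw [adPow_neg_left, adPow_add_right, adPow_smul, smul_add]
  simp only [← Int.cast_smul_eq_zsmul ℂ, smul_smul, ← Finset.sum_smul]
  rw [smul_add, smul_smul, smul_smul, sub_eq_add_neg, ← neg_smul]
  congr 1
  congr 1
  have h2 := congrArg (fun q : ℚ => (q : ℂ)) (keyQ m)
  push_cast [apply_ite (fun q : ℚ => (q : ℂ))] at h2
  have hc : ∀ i ∈ Finset.range (m+1),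
      (((bernoulli' i / i.factorial : ℚ)) : ℂ) * ((((-1:ℤ)^i : ℤ) : ℂ) * (((m-i).factorial : ℂ))⁻¹)
        = (-1:ℂ)^i * ((bernoulli' i : ℂ) / (i.factorial : ℂ)) * (((m-i).factorial : ℂ))⁻¹ := by
    intro i _
    push_cast
    ring
  rw [Finset.sum_congr rfl hc, h2]
  push_cast
  by_cases h1 : m = 1 <;> simp only [h1, if_true, if_false] <;> ring
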